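/- arXiv:2511.02603 — 3 statements merged into one kernel-verified Lean document; each statement's English description precedes it below -/
import Mathlib

section
/- Under the ideal generative model, assume the confidences are integrable in the sense that E[|log C_1| + |log(1−C_1)|] < ∞, and assume the confidences are informative, i.e. P(C_1 = 1/K) = 0. Then the normalized posteriors satisfy X_1(m) → 1 almost surely and X_k(m) → 0 almost surely for every k ≠ 1 as m → ∞; consequently P(argmax_{j ∈ {1,...,K}} X_j(m) = 1) → 1 as m → ∞. -/
open MeasureTheory ProbabilityTheory Filter

/-- One-versus-rest likelihood: for a response `r` and a confidence `c ∈ (0,1)`, under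
hypothesis `I = i` the likelihood is `c` if `r = i` and `(1-c)/(K-1)` otherwise.
Candidates are indexed by `Fin K`, with index `0` playing the role of the index `1`
(the correct answer). -/
noncomputable def ell (K : ℕ) (i r : Fin K) (c : ℝ) : ℝ :=
  if r = i then c else (1 - c) / ((K : ℝ) - 1)

/-- Unnormalized posterior `A j (m) = ∏_{t=1}^m ℓ_j (R_t, C_t)`. -/
noncomputable def Apost {Ω : Type*} (K : ℕ) (R : ℕ → Ω → Fin K) (C : ℕ → Ω → ℝ)
    (j : Fin K) (m : ℕ) (ω : Ω) : ℝ :=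
  ∏ t ∈ Finset.range m, ell K j (R t ω) (C t ω)

/-- Normalized posterior `X j (m) = A j (m) / ∑ k, A k (m)`. -/
noncomputable def Xpost {Ω : Type*} (K : ℕ) (R : ℕ → Ω → Fin K) (C : ℕ → Ω → ℝ)
    (j : Fin K) (m : ℕ) (ω : Ω) : ℝ :=
  Apost K R C j m ω / ∑ k : Fin K, Apost K R C k m ω

/-!
For `k ≠ 0`, `log (A k m / A 0 m)` is a sum of i.i.d. increments
`(𝟙[R = k] - 𝟙[R = 0]) · log (C / q(C))` with `q(c) = (1 - c)/(K - 1)`. Conditioning on `C`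
replaces the indicators by `q(C)` and `C`, so the mean increment is
`E[(q(C) - C) log (C / q(C))]`, which is negative because `C ≠ q(C)` almost surely
(this is the informativeness `C ≠ 1/K`). By the strong law of large numbers
`A k m / A 0 m → 0` almost surely, which pushes all posterior mass onto the correct answer; since
the correct answer is then eventually the strict argmax almost surely, the probability of that
event tends to one.
-/

lemma tendsto_atBot_of_tendsto_div_natCast {S : ℕ → ℝ} {L : ℝ} (hL : L < 0)
    (h : Tendsto (fun n : ℕ => S n / n) atTop (nhds L)) : Tendsto S atTop atBot := by
  refine (h.neg_mul_atTop hL tendsto_natCast_atTop_atTop).congr' ?_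
  filter_upwards [eventually_ne_atTop 0] with n hn
  exact div_mul_cancel₀ _ (Nat.cast_ne_zero.2 hn)

lemma tendsto_measure_of_ae_eventually_mem {Ω : Type*} [MeasurableSpace Ω] {μ : Measure Ω}
    [IsProbabilityMeasure μ] {E : ℕ → Set Ω} (h : ∀ᵐ ω ∂μ, ∀ᶠ m in atTop, ω ∈ E m) :
    Tendsto (fun m => μ (E m)) atTop (nhds 1) := by
  set I : ℕ → Set Ω := fun N => ⋂ m ∈ Set.Ici N, E m
  have hI : Monotone I := fun a b hab => Set.biInter_subset_biInter_left (Set.Ici_subset_Ici.2 hab)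
  have hU : μ (⋃ N, I N) = 1 := by
    rw [← measure_univ (μ := μ)]
    refine measure_congr (ae_eq_univ.2 (ae_iff.1 ?_))
    filter_upwards [h] with ω hω
    obtain ⟨N, hN⟩ := eventually_atTop.1 hω
    exact Set.mem_iUnion.2 ⟨N, Set.mem_iInter₂.2 hN⟩
  refine tendsto_of_tendsto_of_tendsto_of_le_of_le (hU ▸ tendsto_measure_iUnion_atTop hI)
    tendsto_const_nhds (fun m => measure_mono (Set.biInter_subset_of_mem Set.self_mem_Ici))
    (fun _ => prob_le_one)

lemma integral_neg_of_ae_neg {α : Type*} [MeasurableSpace α] {μ : Measure α} [NeZero μ]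
    {f : α → ℝ} (hf : ∀ᵐ x ∂μ, f x < 0) (hfi : Integrable f μ) : ∫ x, f x ∂μ < 0 := by
  have hsupp : Function.support (fun x => -f x) =ᵐ[μ] Set.univ := by
    refine ae_eq_univ.2 (ae_iff.1 ?_)
    filter_upwards [hf] with x hx
    exact neg_ne_zero.2 hx.ne
  have hpos : 0 < ∫ x, -f x ∂μ := by
    rw [integral_pos_iff_support_of_nonneg_ae (hf.mono fun x hx => by simp [hx.le])
      (integrable_fun_neg_iff.2 hfi), measure_congr hsupp]
    exact NeZero.pos _
  rw [integral_neg] at hpos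
  linarith

lemma log_sub_log_mul_sub_neg {a b : ℝ} (ha : 0 < a) (hb : 0 < b) (hab : a ≠ b) :
    (Real.log a - Real.log b) * (b - a) < 0 := by
  rcases hab.lt_or_gt with h | h
  · exact mul_neg_of_neg_of_pos (sub_neg.2 (Real.log_lt_log ha h)) (sub_pos.2 h)
  · exact mul_neg_of_pos_of_neg (sub_pos.2 (Real.log_lt_log hb h)) (sub_neg.2 h)

lemma tendsto_div_sum_of_tendsto_div {ι α : Type*} [Fintype ι] [DecidableEq ι] {l : Filter α}
    {A : ι → α → ℝ} {i : ι} (hAi : ∀ a, A i a ≠ 0)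
    (h : ∀ j, j ≠ i → Tendsto (fun a => A j a / A i a) l (nhds 0)) (j : ι) :
    Tendsto (fun a => A j a / ∑ k, A k a) l (nhds (if j = i then 1 else 0)) := by
  have hratio : ∀ j, Tendsto (fun a => A j a / A i a) l (nhds (if j = i then 1 else 0)) := by
    intro j
    split_ifs with hj
    · subst hj
      exact tendsto_const_nhds.congr fun a => (div_self (hAi a)).symm
    · exact h j hj
  have hsum : Tendsto (fun a => ∑ k, A k a / A i a) l (nhds 1) := by
    simpa using tendsto_finsetSum Finset.univ fun k _ => hratio k
  refine (div_one (if j = i then (1 : ℝ) else 0) ▸ (hratio j).div hsum one_ne_zero).congr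
    fun a => ?_
  change A j a / A i a / ∑ k, A k a / A i a = _
  rw [← Finset.sum_div, div_div_div_cancel_right₀ (hAi a)]

section Likelihood

variable {K : ℕ}

/-- `log ℓ_r(r, c) - log ℓ_j(r, c)` for any `j ≠ r`. -/
noncomputable def logLikRatio (K : ℕ) (c : ℝ) : ℝ :=
  Real.log c - Real.log ((1 - c) / ((K : ℝ) - 1))

noncomputable def logLikIncrement (K : ℕ) [NeZero K] (k : Fin K) (p : Fin K × ℝ) : ℝ :=
  Real.log (ell K k p.1 p.2) - Real.log (ell K 0 p.1 p.2)

lemma ell_pos (hK : 1 < K) {c : ℝ} (hc : c ∈ Set.Ioo 0 1) (i r : Fin K) : 0 < ell K i r c := by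
  have hK' : (1 : ℝ) < K := by exact_mod_cast hK
  unfold ell
  split_ifs
  exacts [hc.1, div_pos (sub_pos.2 hc.2) (sub_pos.2 hK')]

lemma measurable_logLikRatio : Measurable (logLikRatio K) := by
  unfold logLikRatio
  fun_prop

lemma logLikIncrement_eq [NeZero K] (k r : Fin K) (c : ℝ) :
    logLikIncrement K k (r, c) =
      ((if r = k then 1 else 0) - (if r = 0 then 1 else 0)) * logLikRatio K c := by
  unfold logLikIncrement ell logLikRatio
  split_ifs <;> ring

lemma measurable_logLikIncrement [NeZero K] (k : Fin K) : Measurable (logLikIncrement K k) := by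
  have hind : ∀ j : Fin K, Measurable fun p : Fin K × ℝ => if p.1 = j then (1 : ℝ) else 0 :=
    fun j => measurable_const.ite (measurable_fst (measurableSet_singleton j)) measurable_const
  rw [show logLikIncrement K k = _ from funext fun p => logLikIncrement_eq k p.1 p.2]
  exact ((hind k).sub (hind 0)).mul (measurable_logLikRatio.comp measurable_snd)

lemma abs_logLikRatio_le (hK : 1 < K) {c : ℝ} (hc : c < 1) :
    |logLikRatio K c| ≤ |Real.log c| + |Real.log (1 - c)| + |Real.log ((K : ℝ) - 1)| := by
  have hK' : (1 : ℝ) < K := by exact_mod_cast hK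
  rw [logLikRatio, Real.log_div (sub_ne_zero.2 hc.ne') (sub_ne_zero.2 hK'.ne'),
    show ∀ x y z : ℝ, x - (y - z) = x + -y + z by intros; ring, ← abs_neg (Real.log (1 - c))]
  exact abs_add_three _ _ _

/-- The integrand of the drift `E[(q - c) log (c / q)]`, `q = (1 - c)/(K - 1)`; it vanishes only
where `c = q`, i.e. `c = 1/K`. -/
lemma logLikRatio_mul_neg (hK : 1 < K) {c : ℝ} (hc : c ∈ Set.Ioo 0 1) (hcK : c ≠ 1 / K) :
    logLikRatio K c * ((1 - c) / ((K : ℝ) - 1) - c) < 0 := by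
  have hK' : (1 : ℝ) < K := by exact_mod_cast hK
  refine log_sub_log_mul_sub_neg hc.1 (div_pos (sub_pos.2 hc.2) (sub_pos.2 hK')) fun h => hcK ?_
  rw [eq_div_iff (sub_pos.2 hK').ne'] at h
  rw [eq_div_iff (by positivity)]
  linarith

lemma Apost_pos {Ω : Type*} (hK : 1 < K) {R : ℕ → Ω → Fin K} {C : ℕ → Ω → ℝ} {ω : Ω}
    (hC : ∀ t, C t ω ∈ Set.Ioo 0 1) (j : Fin K) (m : ℕ) : 0 < Apost K R C j m ω :=
  Finset.prod_pos fun t _ => ell_pos hK (hC t) j (R t ω)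

lemma Apost_div_Apost_zero [NeZero K] {Ω : Type*} (hK : 1 < K) {R : ℕ → Ω → Fin K}
    {C : ℕ → Ω → ℝ} {ω : Ω} (hC : ∀ t, C t ω ∈ Set.Ioo 0 1) (k : Fin K) (m : ℕ) :
    Apost K R C k m ω / Apost K R C 0 m ω =
      Real.exp (∑ t ∈ Finset.range m, logLikIncrement K k (R t ω, C t ω)) := by
  rw [Real.exp_sum, Apost, Apost, ← Finset.prod_div_distrib]
  refine Finset.prod_congr rfl fun t _ => ?_
  rw [logLikIncrement, Real.exp_sub, Real.exp_log (ell_pos hK (hC t) _ _),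
    Real.exp_log (ell_pos hK (hC t) _ _)]

end Likelihood

section Probability

variable {Ω : Type*} [MeasurableSpace Ω] {μ : Measure Ω} {K : ℕ}

lemma integrable_logLikRatio [IsFiniteMeasure μ] (hK : 1 < K) {C₀ : Ω → ℝ} (hC : Measurable C₀)
    (hC1 : ∀ᵐ ω ∂μ, C₀ ω < 1)
    (hint : Integrable (fun ω => |Real.log (C₀ ω)| + |Real.log (1 - C₀ ω)|) μ) :
    Integrable (fun ω => logLikRatio K (C₀ ω)) μ :=
  (hint.add (integrable_const |Real.log ((K : ℝ) - 1)|)).mono'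
    (measurable_logLikRatio.comp hC).aestronglyMeasurable
    (hC1.mono fun _ hω => abs_logLikRatio_le hK hω)

lemma integrable_logLikIncrement [NeZero K] {R₀ : Ω → Fin K} {C₀ : Ω → ℝ} (hR : Measurable R₀)
    (hC : Measurable C₀) (hllr : Integrable (fun ω => logLikRatio K (C₀ ω)) μ) (k : Fin K) :
    Integrable (fun ω => logLikIncrement K k (R₀ ω, C₀ ω)) μ := by
  refine hllr.norm.mono' ((measurable_logLikIncrement k).comp (hR.prodMk hC)).aestronglyMeasurable
    (ae_of_all _ fun ω => ?_)
  rw [logLikIncrement_eq, norm_mul]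
  exact mul_le_of_le_one_left (norm_nonneg _) (by split_ifs <;> norm_num)

lemma integral_logLikIncrement_neg [NeZero K] [IsProbabilityMeasure μ] (hK : 1 < K)
    {R₀ : Ω → Fin K} {C₀ : Ω → ℝ} (hR : Measurable R₀) (hC : Measurable C₀)
    (hC01 : ∀ᵐ ω ∂μ, C₀ ω ∈ Set.Ioo (0 : ℝ) 1)
    (hcond : ∀ j : Fin K,
      μ[(fun ω => if R₀ ω = j then (1 : ℝ) else 0) | MeasurableSpace.comap C₀ inferInstance]
        =ᵐ[μ] fun ω => if j = 0 then C₀ ω else (1 - C₀ ω) / ((K : ℝ) - 1))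
    (hllr : Integrable (fun ω => logLikRatio K (C₀ ω)) μ)
    (hinfo : μ {ω | C₀ ω = 1 / (K : ℝ)} = 0) {k : Fin K} (hk : k ≠ 0) :
    ∫ ω, logLikIncrement K k (R₀ ω, C₀ ω) ∂μ < 0 := by
  set ind : Fin K → Ω → ℝ := fun j ω => if R₀ ω = j then 1 else 0
  have hind : ∀ j, Integrable (ind j) μ := fun j =>
    .of_bound (measurable_const.ite (hR (measurableSet_singleton j))
      measurable_const).aestronglyMeasurable 1 (ae_of_all _ fun ω => by
        simp only [ind]; split_ifs <;> norm_num)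
  have hY : (fun ω => logLikIncrement K k (R₀ ω, C₀ ω)) =
      (fun ω => logLikRatio K (C₀ ω)) * (ind k - ind 0) :=
    funext fun ω => (logLikIncrement_eq k (R₀ ω) (C₀ ω)).trans (mul_comm _ _)
  have hllr_meas : StronglyMeasurable[MeasurableSpace.comap C₀ inferInstance]
      (fun ω => logLikRatio K (C₀ ω)) :=
    (measurable_logLikRatio.comp (comap_measurable C₀)).stronglyMeasurable
  -- Conditioning on `C₀` replaces the response indicators by their conditional probabilities.
  have hcondY :
      μ[fun ω => logLikIncrement K k (R₀ ω, C₀ ω) | MeasurableSpace.comap C₀ inferInstance] =ᵐ[μ]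
        fun ω => logLikRatio K (C₀ ω) * ((1 - C₀ ω) / ((K : ℝ) - 1) - C₀ ω) := by
    have hpull := condExp_mul_of_stronglyMeasurable_left hllr_meas
      (hY ▸ integrable_logLikIncrement hR hC hllr k) ((hind k).sub (hind 0))
    rw [hY]
    filter_upwards [hpull, condExp_sub (hind k) (hind 0) (MeasurableSpace.comap C₀ inferInstance),
      hcond k, hcond 0] with ω h1 h2 h3 h4
    rw [h1, Pi.mul_apply, h2, Pi.sub_apply, h3, h4, if_neg hk, if_pos rfl]
  rw [← integral_condExp hC.comap_le, integral_congr_ae hcondY]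
  refine integral_neg_of_ae_neg ?_ (integrable_condExp.congr hcondY)
  filter_upwards [hC01, measure_eq_zero_iff_ae_notMem.1 hinfo] with ω hω hne
  exact logLikRatio_mul_neg hK hω hne

lemma ae_tendsto_Apost_div_Apost_zero [NeZero K] [IsProbabilityMeasure μ] (hK : 1 < K)
    {R : ℕ → Ω → Fin K} {C : ℕ → Ω → ℝ}
    (hRmeas : ∀ t, Measurable (R t)) (hCmeas : ∀ t, Measurable (C t))
    (hindep : iIndepFun (fun t ω => (R t ω, C t ω)) μ)
    (hident : ∀ t, IdentDistrib (fun ω => (R t ω, C t ω)) (fun ω => (R 0 ω, C 0 ω)) μ μ)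
    (hC01 : ∀ t, ∀ᵐ ω ∂μ, C t ω ∈ Set.Ioo (0 : ℝ) 1)
    (hcond : ∀ j : Fin K,
      μ[(fun ω => if R 0 ω = j then (1 : ℝ) else 0) | MeasurableSpace.comap (C 0) inferInstance]
        =ᵐ[μ] fun ω => if j = 0 then C 0 ω else (1 - C 0 ω) / ((K : ℝ) - 1))
    (hllr : Integrable (fun ω => logLikRatio K (C 0 ω)) μ)
    (hinfo : μ {ω | C 0 ω = 1 / (K : ℝ)} = 0) {k : Fin K} (hk : k ≠ 0) :
    ∀ᵐ ω ∂μ, Tendsto (fun m => Apost K R C k m ω / Apost K R C 0 m ω) atTop (nhds 0) := by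
  have hslln := strong_law_ae_real (fun t ω => logLikIncrement K k (R t ω, C t ω))
    (integrable_logLikIncrement (hRmeas 0) (hCmeas 0) hllr k)
    (fun i j hij => (hindep.comp _ fun _ => measurable_logLikIncrement k).indepFun hij)
    (fun t => (hident t).comp (measurable_logLikIncrement k))
  have hdrift := integral_logLikIncrement_neg hK (hRmeas 0) (hCmeas 0) (hC01 0) hcond hllr hinfo hk
  filter_upwards [hslln, ae_all_iff.2 hC01] with ω hω hC
  simp_rw [Apost_div_Apost_zero hK hC]
  exact Real.tendsto_exp_atBot.comp (tendsto_atBot_of_tendsto_div_natCast hdrift hω)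

end Probability

/-- **ideal model consistency.** In the ideal generative model the pairs
`(R t, C t)` are i.i.d., the confidences take values in `(0,1)`, and conditionally on
`C t` the response equals the correct index (here `0`) with probability `C t` and each
other index with probability `(1 - C t)/(K-1)`. Assume the confidences are integrable,
`E[|log C_1| + |log (1 - C_1)|] < ∞`, and informative, `P(C_1 = 1/K) = 0`. Then
`X_1 (m) → 1` a.s. and `X_k (m) → 0` a.s. for every `k ≠ 1`; consequently
`P(argmax_j X_j (m) = 1) → 1` (the correct index is the unique maximizer with
probability tending to one). -/
theorem stmt0 {Ω : Type*} [MeasurableSpace Ω] (μ : Measure Ω) [IsProbabilityMeasure μ]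
    (K : ℕ) [NeZero K] (hK : 2 ≤ K)
    (R : ℕ → Ω → Fin K) (C : ℕ → Ω → ℝ)
    (hRmeas : ∀ t, Measurable (R t)) (hCmeas : ∀ t, Measurable (C t))
    -- the pairs (R t, C t) are i.i.d.
    (hindep : iIndepFun (fun t ω => (R t ω, C t ω)) μ)
    (hident : ∀ t, IdentDistrib (fun ω => (R t ω, C t ω)) (fun ω => (R 0 ω, C 0 ω)) μ μ)
    -- confidences take values in (0,1)
    (hC01 : ∀ t, ∀ᵐ ω ∂μ, C t ω ∈ Set.Ioo (0 : ℝ) 1)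
    -- conditionally on `C t = c`, the response is correct w.p. `c`, and equals each
    -- wrong index w.p. `(1-c)/(K-1)`
    (hcond : ∀ t, ∀ j : Fin K,
      μ[(fun ω => if R t ω = j then (1 : ℝ) else 0) |
          MeasurableSpace.comap (C t) inferInstance]
        =ᵐ[μ] fun ω => if j = 0 then C t ω else (1 - C t ω) / ((K : ℝ) - 1))
    -- integrability of the log-confidences
    (hint : Integrable (fun ω => |Real.log (C 0 ω)| + |Real.log (1 - C 0 ω)|) μ)
    -- informativeness
    (hinfo : μ {ω | C 0 ω = 1 / (K : ℝ)} = 0) :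
    (∀ᵐ ω ∂μ, Tendsto (fun m => Xpost K R C 0 m ω) atTop (nhds 1)) ∧
    (∀ k : Fin K, k ≠ 0 →
      ∀ᵐ ω ∂μ, Tendsto (fun m => Xpost K R C k m ω) atTop (nhds 0)) ∧
    Tendsto
      (fun m => μ {ω | ∀ k : Fin K, k ≠ 0 → Xpost K R C k m ω < Xpost K R C 0 m ω})
      atTop (nhds 1) := by
  have hllr := integrable_logLikRatio hK (hCmeas 0) ((hC01 0).mono fun _ h => h.2) hint
  have hratio : ∀ᵐ ω ∂μ, ∀ k : Fin K, k ≠ 0 →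
      Tendsto (fun m => Apost K R C k m ω / Apost K R C 0 m ω) atTop (nhds 0) := by
    refine ae_all_iff.2 fun k => ?_
    rcases eq_or_ne k 0 with rfl | hk
    · exact ae_of_all _ fun _ h => absurd rfl h
    · filter_upwards [ae_tendsto_Apost_div_Apost_zero hK hRmeas hCmeas hindep hident hC01
        (hcond 0) hllr hinfo hk] with ω hω _ using hω
  have hlim : ∀ᵐ ω ∂μ, ∀ j : Fin K,
      Tendsto (fun m => Xpost K R C j m ω) atTop (nhds (if j = 0 then 1 else 0)) := by
    filter_upwards [hratio, ae_all_iff.2 hC01] with ω hω hC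
    exact tendsto_div_sum_of_tendsto_div (fun m => (Apost_pos hK hC 0 m).ne') hω
  refine ⟨hlim.mono fun ω h => by simpa using h 0,
    fun k hk => hlim.mono fun ω h => by simpa [hk] using h k, ?_⟩
  refine tendsto_measure_of_ae_eventually_mem (hlim.mono fun ω h => eventually_all.2 fun k => ?_)
  rcases eq_or_ne k 0 with rfl | hk
  · exact .of_forall fun _ h => absurd rfl h
  · exact ((h k).eventually_lt (h 0) (by simp [hk])).mono fun _ h _ => h
end

section
/- Under the ideal generative model, assume E[|log C_1| + |log(1−C_1)|] < ∞ and P(C_1 = 1/K) = 0. Then for every k ≠ 1, the likelihood ratio A_1(m)/A_k(m) tends to +∞ almost surely as m → ∞. -/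
open MeasureTheory ProbabilityTheory Filter

/-!
The log of `A_0(m) / A_k(m)` is a sum of i.i.d. increments `L(C_t) (1{R_t = 0} - 1{R_t = k})`,
where `L(c) = log (c / ((1 - c)/(K - 1)))`. Conditioning on `C_t` replaces the bracket by
`C_t - (1 - C_t)/(K - 1)`, so the mean increment is `E[log (a/b) (a - b)]` with `a = C_t`,
`b = (1 - C_t)/(K - 1)`. This is positive: the integrand is positive whenever `a ≠ b`, that is,
whenever `C_t ≠ 1/K`. The strong law of large numbers then sends the log ratio, hence the ratio,
to `+∞`.
-/

theorem Real.log_div_mul_sub_pos {a b : ℝ} (ha : 0 < a) (hb : 0 < b) (hab : a ≠ b) :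
    0 < Real.log (a / b) * (a - b) := by
  rw [Real.log_div ha.ne' hb.ne']
  rcases hab.lt_or_gt with h | h
  · exact mul_pos_of_neg_of_neg (sub_neg.2 (Real.log_lt_log ha h)) (sub_neg.2 h)
  · exact mul_pos (sub_pos.2 (Real.log_lt_log hb h)) (sub_pos.2 h)

theorem MeasureTheory.integral_pos_of_ae_pos {α : Type*} [MeasurableSpace α] {μ : Measure α}
    [NeZero μ] {f : α → ℝ} (hf : ∀ᵐ x ∂μ, 0 < f x) (hfi : Integrable f μ) :
    0 < ∫ x, f x ∂μ := by
  rw [integral_pos_iff_support_of_nonneg_ae (hf.mono fun _ h => h.le) hfi]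
  have hsupp : (Set.univ : Set α) ≤ᵐ[μ] Function.support f :=
    hf.mono fun x hx _ => hx.ne'
  exact (Measure.measure_univ_pos.2 (NeZero.ne μ)).trans_le (measure_mono_ae hsupp)

theorem ProbabilityTheory.tendsto_sum_atTop_of_integral_pos {Ω : Type*} [MeasurableSpace Ω]
    {μ : Measure Ω} (X : ℕ → Ω → ℝ) (hint : Integrable (X 0) μ)
    (hindep : Pairwise (Function.onFun (IndepFun · · μ) X))
    (hident : ∀ t, IdentDistrib (X t) (X 0) μ μ) (hpos : 0 < μ[X 0]) :
    ∀ᵐ ω ∂μ, Tendsto (fun m => ∑ t ∈ Finset.range m, X t ω) atTop atTop := by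
  filter_upwards [strong_law_ae_real X hint hindep hident] with ω hω
  refine (hω.pos_mul_atTop hpos tendsto_natCast_atTop_atTop).congr' ?_
  filter_upwards [eventually_ne_atTop 0] with m hm
  exact div_mul_cancel₀ _ (Nat.cast_ne_zero.2 hm)

theorem MeasureTheory.integral_mul_eq_integral_mul_of_condExp_ae_eq {Ω : Type*}
    {m m₀ : MeasurableSpace Ω} {μ : Measure Ω} [IsFiniteMeasure μ] (hm : m ≤ m₀)
    {g Y Z : Ω → ℝ} (hg : StronglyMeasurable[m] g) (hgY : Integrable (fun ω => g ω * Y ω) μ)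
    (hY : Integrable Y μ) (hYZ : μ[Y | m] =ᵐ[μ] Z) :
    ∫ ω, g ω * Y ω ∂μ = ∫ ω, g ω * Z ω ∂μ := by
  rw [← integral_condExp hm]
  exact integral_congr_ae ((condExp_mul_of_stronglyMeasurable_left hg hgY hY).trans
    (EventuallyEq.rfl.mul hYZ))

noncomputable def logOdds (K : ℕ) (c : ℝ) : ℝ :=
  Real.log (c / ((1 - c) / ((K : ℝ) - 1)))

noncomputable def logLikelihoodRatio (K : ℕ) [NeZero K] (k r : Fin K) (c : ℝ) : ℝ :=
  logOdds K c * ((if r = 0 then 1 else 0) - if r = k then 1 else 0)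

section
variable {K : ℕ}

theorem measurable_logOdds : Measurable (logOdds K) := by
  unfold logOdds; fun_prop

theorem abs_logOdds_le (hK : 1 < K) {c : ℝ} (hc : c ∈ Set.Ioo (0 : ℝ) 1) :
    |logOdds K c| ≤ |Real.log c| + |Real.log (1 - c)| + |Real.log ((K : ℝ) - 1)| := by
  have hK1 : (0 : ℝ) < K - 1 := by rw [sub_pos]; exact_mod_cast hK
  have h1c : (0 : ℝ) < 1 - c := sub_pos.2 hc.2
  rw [logOdds, Real.log_div hc.1.ne' (div_pos h1c hK1).ne', Real.log_div h1c.ne' hK1.ne']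
  refine abs_le.2 ⟨?_, ?_⟩ <;>
  linarith [neg_abs_le (Real.log c), neg_abs_le (Real.log (1 - c)),
    neg_abs_le (Real.log ((K : ℝ) - 1)), le_abs_self (Real.log c),
    le_abs_self (Real.log (1 - c)), le_abs_self (Real.log ((K : ℝ) - 1))]

theorem logOdds_mul_sub_pos (hK : 1 < K) {c : ℝ} (hc : c ∈ Set.Ioo (0 : ℝ) 1)
    (hne : c ≠ 1 / K) : 0 < logOdds K c * (c - (1 - c) / ((K : ℝ) - 1)) := by
  have hK1 : (0 : ℝ) < K - 1 := by rw [sub_pos]; exact_mod_cast hK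
  refine Real.log_div_mul_sub_pos hc.1 (div_pos (sub_pos.2 hc.2) hK1) fun h => hne ?_
  rw [eq_div_iff hK1.ne'] at h
  rw [eq_div_iff (by positivity)]
  linarith

theorem integrable_logOdds_comp_mul {Ω : Type*} [MeasurableSpace Ω] {μ : Measure Ω}
    [IsFiniteMeasure μ] (hK : 1 < K) {C Y : Ω → ℝ} (hC : Measurable C)
    (hC01 : ∀ᵐ ω ∂μ, C ω ∈ Set.Ioo (0 : ℝ) 1)
    (hint : Integrable (fun ω => |Real.log (C ω)| + |Real.log (1 - C ω)|) μ)
    (hY : AEStronglyMeasurable Y μ) (hY1 : ∀ᵐ ω ∂μ, |Y ω| ≤ 1) :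
    Integrable (fun ω => logOdds K (C ω) * Y ω) μ := by
  refine (hint.add (integrable_const |Real.log ((K : ℝ) - 1)|)).mono'
    ((measurable_logOdds.comp hC).aestronglyMeasurable.mul hY) ?_
  filter_upwards [hC01, hY1] with ω hc hy
  rw [Real.norm_eq_abs, abs_mul]
  calc |logOdds K (C ω)| * |Y ω| ≤ |logOdds K (C ω)| := mul_le_of_le_one_right (abs_nonneg _) hy
    _ ≤ _ := abs_logOdds_le hK hc

theorem integrable_logOdds_comp_mul_sub {Ω : Type*} [MeasurableSpace Ω] {μ : Measure Ω}
    [IsFiniteMeasure μ] (hK : 1 < K) {C : Ω → ℝ} (hC : Measurable C)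
    (hC01 : ∀ᵐ ω ∂μ, C ω ∈ Set.Ioo (0 : ℝ) 1)
    (hint : Integrable (fun ω => |Real.log (C ω)| + |Real.log (1 - C ω)|) μ) :
    Integrable (fun ω => logOdds K (C ω) * (C ω - (1 - C ω) / ((K : ℝ) - 1))) μ := by
  refine integrable_logOdds_comp_mul hK hC hC01 hint (by fun_prop) ?_
  filter_upwards [hC01] with ω hc
  have hK2 : (2 : ℝ) ≤ K := by exact_mod_cast hK
  exact abs_sub_le_of_nonneg_of_le hc.1.le hc.2.le
    (div_nonneg (sub_pos.2 hc.2).le (by linarith))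
    (div_le_one_of_le₀ (by linarith [hc.1]) (by linarith))

variable [NeZero K]

theorem measurable_logLikelihoodRatio (k : Fin K) :
    Measurable (Function.uncurry (logLikelihoodRatio K k)) :=
  measurable_from_prod_countable_right fun r => (measurable_logOdds.mul_const _ :
    Measurable (logLikelihoodRatio K k r))

theorem ell_div_ell_eq_exp_logLikelihoodRatio (hK : 1 < K) {k : Fin K} (hk : k ≠ 0)
    (r : Fin K) {c : ℝ} (hc : c ∈ Set.Ioo (0 : ℝ) 1) :
    ell K 0 r c / ell K k r c = Real.exp (logLikelihoodRatio K k r c) := by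
  have hK1 : (0 : ℝ) < K - 1 := by rw [sub_pos]; exact_mod_cast hK
  have hq : 0 < (1 - c) / ((K : ℝ) - 1) := div_pos (sub_pos.2 hc.2) hK1
  have hexp : Real.exp (logOdds K c) = c / ((1 - c) / ((K : ℝ) - 1)) :=
    Real.exp_log (div_pos hc.1 hq)
  by_cases h0 : r = 0
  · subst h0
    simp [ell, logLikelihoodRatio, hk.symm, hexp]
  by_cases hrk : r = k
  · subst hrk
    simp [ell, logLikelihoodRatio, h0, Real.exp_neg, hexp]
  · simp [ell, logLikelihoodRatio, h0, hrk, hq.ne']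

theorem Apost_div_Apost_eq_exp_sum {Ω : Type*} (hK : 1 < K) {k : Fin K} (hk : k ≠ 0)
    {R : ℕ → Ω → Fin K} {C : ℕ → Ω → ℝ} {ω : Ω} (hC : ∀ t, C t ω ∈ Set.Ioo (0 : ℝ) 1)
    (m : ℕ) :
    Apost K R C 0 m ω / Apost K R C k m ω =
      Real.exp (∑ t ∈ Finset.range m, logLikelihoodRatio K k (R t ω) (C t ω)) := by
  rw [Real.exp_sum, Apost, Apost, ← Finset.prod_div_distrib]
  exact Finset.prod_congr rfl fun t _ => ell_div_ell_eq_exp_logLikelihoodRatio hK hk _ (hC t)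

theorem integrable_logLikelihoodRatio_comp {Ω : Type*} [MeasurableSpace Ω] {μ : Measure Ω}
    [IsFiniteMeasure μ] (hK : 1 < K) (k : Fin K) {R : Ω → Fin K} {C : Ω → ℝ}
    (hR : Measurable R) (hC : Measurable C) (hC01 : ∀ᵐ ω ∂μ, C ω ∈ Set.Ioo (0 : ℝ) 1)
    (hint : Integrable (fun ω => |Real.log (C ω)| + |Real.log (1 - C ω)|) μ) :
    Integrable (fun ω => logLikelihoodRatio K k (R ω) (C ω)) μ := by
  have hind (j : Fin K) : Measurable fun ω => if R ω = j then (1 : ℝ) else 0 :=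
    Measurable.ite (hR (measurableSet_singleton j)) measurable_const measurable_const
  refine integrable_logOdds_comp_mul hK hC hC01 hint
    ((hind 0).sub (hind k)).aestronglyMeasurable (ae_of_all _ fun ω => ?_)
  split_ifs <;> norm_num

theorem integral_logLikelihoodRatio_comp {Ω : Type*} [MeasurableSpace Ω] {μ : Measure Ω}
    [IsFiniteMeasure μ] (hK : 1 < K) {k : Fin K} (hk : k ≠ 0) {R : Ω → Fin K} {C : Ω → ℝ}
    (hR : Measurable R) (hC : Measurable C) (hC01 : ∀ᵐ ω ∂μ, C ω ∈ Set.Ioo (0 : ℝ) 1)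
    (hint : Integrable (fun ω => |Real.log (C ω)| + |Real.log (1 - C ω)|) μ)
    (hcond : ∀ j : Fin K,
      μ[(fun ω => if R ω = j then (1 : ℝ) else 0) | MeasurableSpace.comap C inferInstance]
        =ᵐ[μ] fun ω => if j = 0 then C ω else (1 - C ω) / ((K : ℝ) - 1)) :
    ∫ ω, logLikelihoodRatio K k (R ω) (C ω) ∂μ =
      ∫ ω, logOdds K (C ω) * (C ω - (1 - C ω) / ((K : ℝ) - 1)) ∂μ := by
  have hind (j : Fin K) : Integrable (fun ω => if R ω = j then (1 : ℝ) else 0) μ :=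
    .of_bound (Measurable.ite (hR (measurableSet_singleton j)) measurable_const
      measurable_const).aestronglyMeasurable 1
      (ae_of_all _ fun ω => by split_ifs <;> norm_num)
  refine integral_mul_eq_integral_mul_of_condExp_ae_eq hC.comap_le
    (g := fun ω => logOdds K (C ω))
    (measurable_logOdds.comp (comap_measurable C)).stronglyMeasurable
    (integrable_logLikelihoodRatio_comp hK k hR hC hC01 hint) ((hind 0).sub (hind k)) ?_
  filter_upwards [condExp_sub (hind 0) (hind k) (MeasurableSpace.comap C inferInstance),
    hcond 0, hcond k] with ω hsub h0 hk'
  rw [Pi.sub_apply, h0, hk', if_pos rfl, if_neg hk] at hsub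
  exact hsub

end

/-- **ideal model: likelihood ratios diverge.** In the ideal generative
model (i.i.d. pairs `(R t, C t)`, confidences in `(0,1)`, and, conditionally on `C t`,
the response equals the correct index `0` w.p. `C t` and each wrong index w.p.
`(1 - C t)/(K-1)`), if `E[|log C_1| + |log (1 - C_1)|] < ∞` and `P(C_1 = 1/K) = 0`,
then for every `k ≠ 1` the likelihood ratio `A_1 (m) / A_k (m)` tends to `+∞` almost
surely as `m → ∞`. -/
theorem stmt3 {Ω : Type*} [MeasurableSpace Ω] (μ : Measure Ω) [IsProbabilityMeasure μ]
    (K : ℕ) [NeZero K] (hK : 2 ≤ K)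
    (R : ℕ → Ω → Fin K) (C : ℕ → Ω → ℝ)
    (hRmeas : ∀ t, Measurable (R t)) (hCmeas : ∀ t, Measurable (C t))
    (hindep : iIndepFun (fun t ω => (R t ω, C t ω)) μ)
    (hident : ∀ t, IdentDistrib (fun ω => (R t ω, C t ω)) (fun ω => (R 0 ω, C 0 ω)) μ μ)
    (hC01 : ∀ t, ∀ᵐ ω ∂μ, C t ω ∈ Set.Ioo (0 : ℝ) 1)
    (hcond : ∀ t, ∀ j : Fin K,
      μ[(fun ω => if R t ω = j then (1 : ℝ) else 0) |
          MeasurableSpace.comap (C t) inferInstance]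
        =ᵐ[μ] fun ω => if j = 0 then C t ω else (1 - C t ω) / ((K : ℝ) - 1))
    (hint : Integrable (fun ω => |Real.log (C 0 ω)| + |Real.log (1 - C 0 ω)|) μ)
    (hinfo : μ {ω | C 0 ω = 1 / (K : ℝ)} = 0) :
    ∀ k : Fin K, k ≠ 0 →
      ∀ᵐ ω ∂μ, Tendsto (fun m => Apost K R C 0 m ω / Apost K R C k m ω) atTop atTop := by
  intro k hk
  have hllr := measurable_logLikelihoodRatio k
  have hdrift : ∀ᵐ ω ∂μ, 0 < logOdds K (C 0 ω) * (C 0 ω - (1 - C 0 ω) / ((K : ℝ) - 1)) := by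
    filter_upwards [hC01 0, measure_eq_zero_iff_ae_notMem.1 hinfo] with ω hc hne
    exact logOdds_mul_sub_pos hK hc hne
  have hmean : 0 < ∫ ω, logLikelihoodRatio K k (R 0 ω) (C 0 ω) ∂μ := by
    rw [integral_logLikelihoodRatio_comp hK hk (hRmeas 0) (hCmeas 0) (hC01 0) hint (hcond 0)]
    exact integral_pos_of_ae_pos hdrift
      (integrable_logOdds_comp_mul_sub hK (hCmeas 0) (hC01 0) hint)
  have hsum := tendsto_sum_atTop_of_integral_pos
    (fun t ω => logLikelihoodRatio K k (R t ω) (C t ω))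
    (integrable_logLikelihoodRatio_comp hK k (hRmeas 0) (hCmeas 0) (hC01 0) hint)
    (fun i j hij => (hindep.indepFun hij).comp hllr hllr) (fun t => (hident t).comp hllr) hmean
  filter_upwards [hsum, ae_all_iff.2 hC01] with ω hω hc
  exact (Real.tendsto_exp_atTop.comp hω).congr fun m =>
    (Apost_div_Apost_eq_exp_sum hK hk hc m).symm
end

section
/- Fix an integer K ≥ 2 and k ≠ 1. Let p = (p_1,...,p_K) be a fixed probability vector with p_1 < p_k, and let C be a random variable with C ∈ (0,1) and C < 1/K almost surely and E[|log C| + |log(1−C)|] < ∞. Setting Θ = (1−C)/(K−1), the drift μ_k = (p_1 − p_k)·E[log(C/Θ)] is strictly positive. In particular, for c ∈ (0,1), one has c < 1/K if and only if log(c/θ) < 0 where θ = (1−c)/(K−1), so confidences systematically below 1/K yield a positive drift even when the correct answer is a minority answer (p_1 < p_k). -/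
open MeasureTheory

lemma stmt8_aux (K : ℕ) (hK : 2 ≤ K) (c : ℝ) (hc : c ∈ Set.Ioo (0:ℝ) 1) :
    (c < 1 / (K : ℝ) ↔ Real.log (c / ((1 - c) / ((K : ℝ) - 1))) < 0) := by
  have hK2 : (2:ℝ) ≤ (K:ℝ) := by exact_mod_cast hK
  have hKm1 : (0:ℝ) < (K:ℝ) - 1 := by linarith
  obtain ⟨hc0, hc1⟩ := hc
  have h1c : (0:ℝ) < 1 - c := by linarith
  have hθ : (0:ℝ) < (1 - c) / ((K:ℝ) - 1) := div_pos h1c hKm1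
  have hx : (0:ℝ) < c / ((1 - c) / ((K:ℝ) - 1)) := div_pos hc0 hθ
  rw [Real.log_neg_iff hx, div_lt_one hθ, lt_div_iff₀ hKm1, lt_div_iff₀ (by linarith : (0:ℝ) < (K:ℝ))]
  constructor <;> intro h <;> nlinarith

/-- Fix `K ≥ 2` and a candidate `k` different from the first index
(which plays the role of the index `1`). Let `p` be a fixed probability vector with
`p 0 < p k`, and let `C` be a random variable with `C ∈ (0,1)` and `C < 1/K` almost
surely and `E[|log C| + |log (1-C)|] < ∞`. Setting `Θ = (1-C)/(K-1)`, the drift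
`μ_k = (p 0 − p k) · E[log (C/Θ)]` is strictly positive. In particular, for
`c ∈ (0,1)`, one has `c < 1/K` if and only if `log (c/θ) < 0` where
`θ = (1-c)/(K-1)`, so confidences systematically below `1/K` yield a positive drift
even when the correct answer is a minority answer (`p 0 < p k`). -/
theorem stmt8 {Ω : Type*} [MeasurableSpace Ω] (μ : Measure Ω) [IsProbabilityMeasure μ]
    (K : ℕ) [NeZero K] (hK : 2 ≤ K) (k : Fin K) (hk : k ≠ 0)
    (p : Fin K → ℝ) (hp : ∀ j, 0 ≤ p j) (hpsum : ∑ j : Fin K, p j = 1)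
    (hminority : p 0 < p k)
    (C : Ω → ℝ) (hC : Measurable C)
    (hC01 : ∀ᵐ ω ∂μ, C ω ∈ Set.Ioo (0 : ℝ) 1)
    (hClt : ∀ᵐ ω ∂μ, C ω < 1 / (K : ℝ))
    (hint : Integrable (fun ω => |Real.log (C ω)| + |Real.log (1 - C ω)|) μ) :
    (0 < (p 0 - p k) * ∫ ω, Real.log (C ω / ((1 - C ω) / ((K : ℝ) - 1))) ∂μ) ∧
    ∀ c ∈ Set.Ioo (0 : ℝ) 1,
      (c < 1 / (K : ℝ) ↔ Real.log (c / ((1 - c) / ((K : ℝ) - 1))) < 0) := by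
  have hK2 : (2:ℝ) ≤ (K:ℝ) := by exact_mod_cast hK
  have hKm1 : (0:ℝ) < (K:ℝ) - 1 := by linarith
  set f : Ω → ℝ := fun ω => Real.log (C ω / ((1 - C ω) / ((K : ℝ) - 1))) with hf
  -- integrability
  have habs : ∀ ω, 0 ≤ |Real.log (C ω)| + |Real.log (1 - C ω)| := fun ω => by positivity
  have hintC : Integrable (fun ω => Real.log (C ω)) μ := by
    refine hint.mono ((Real.measurable_log.comp hC).aestronglyMeasurable) ?_
    filter_upwards with ω
    simp only [Real.norm_eq_abs]
    rw [abs_of_nonneg (habs ω)]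
    exact le_add_of_nonneg_right (abs_nonneg _)
  have hint1C : Integrable (fun ω => Real.log (1 - C ω)) μ := by
    refine hint.mono ((Real.measurable_log.comp (measurable_const.sub hC)).aestronglyMeasurable) ?_
    filter_upwards with ω
    simp only [Real.norm_eq_abs]
    rw [abs_of_nonneg (habs ω)]
    exact le_add_of_nonneg_left (abs_nonneg _)
  have hg : Integrable (fun ω => Real.log (C ω) - Real.log (1 - C ω) + Real.log ((K:ℝ) - 1)) μ :=
    (hintC.sub hint1C).add (integrable_const _)
  have heq : (fun ω => Real.log (C ω) - Real.log (1 - C ω) + Real.log ((K:ℝ) - 1)) =ᵐ[μ] f := by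
    filter_upwards [hC01] with ω hω
    obtain ⟨h0, h1⟩ := hω
    have h1c : (0:ℝ) < 1 - C ω := by linarith
    simp only [hf]
    rw [Real.log_div (ne_of_gt h0) (ne_of_gt (div_pos h1c hKm1)),
      Real.log_div (ne_of_gt h1c) (ne_of_gt hKm1)]
    ring
  have hfi : Integrable f μ := hg.congr heq
  -- f < 0 a.e.
  have hfneg : ∀ᵐ ω ∂μ, f ω < 0 := by
    filter_upwards [hC01, hClt] with ω hω hlt
    exact (stmt8_aux K hK (C ω) hω).mp hlt
  have hle : ∫ ω, f ω ∂μ ≤ 0 :=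
    integral_nonpos_of_ae (hfneg.mono fun ω h => le_of_lt h)
  have hne : ∫ ω, f ω ∂μ ≠ 0 := by
    intro h0
    have : ∫ ω, -f ω ∂μ = 0 := by rw [integral_neg, h0, neg_zero]
    have hzero : (fun ω => -f ω) =ᵐ[μ] 0 :=
      (integral_eq_zero_iff_of_nonneg_ae (hfneg.mono fun ω h => by
        show (0:ℝ) ≤ -f ω
        linarith) hfi.neg).mp this
    have : ∀ᵐ ω ∂μ, False := by
      filter_upwards [hfneg, hzero] with ω h1 h2
      simp only [Pi.zero_apply] at h2
      linarith
    have := this.exists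
    simp at this
  have hintneg : ∫ ω, f ω ∂μ < 0 := lt_of_le_of_ne hle hne
  constructor
  · exact mul_pos_of_neg_of_neg (by linarith) hintneg
  · intro c hc
    exact stmt8_aux K hK c hc
end
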